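/- Define y ∈* x iff ∃X: y ε X ∧ x = ι(X). Then Power Set holds for ∈*: for every ordinal a there is an ordinal x such that y ∈* x iff every z ∈* y satisfies z ∈* a. -/
import Mathlib


/-- A two-sorted signature for Class Ordering Theory: `O` is the sort of
ordinals, `C` the sort of (flat, possibly non-extensional) classes of
ordinals, with membership `mem`, the prior relation `prec`, and the (partial)
indexing function `iota` given as a functional relation. -/
structure COT (O : Type*) (C : Type*) where
  mem : O → C → Prop
  prec : C → C → Prop
  iota : C → O → Prop

namespace COT

variable {O C : Type*} (S : COT O C)

/-- Coextensionality of classes. -/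
def equiv (X Y : C) : Prop := ∀ z, S.mem z X ↔ S.mem z Y

/-- `X` is a singleton class of `x`. -/
def isSing (x : O) (X : C) : Prop := ∀ z, S.mem z X ↔ z = x

/-- `x < y` iff `{x} ≺ {y}` (for all classes realizing the singletons). -/
def lt (x y : O) : Prop := ∀ X Y, S.isSing x X → S.isSing y Y → S.prec X Y

/-- `x ≤ y`. -/
def le (x y : O) : Prop := S.lt x y ∨ x = y

/-- `l` is the least ordinal strictly above all elements of `X` (the limit of `X`). -/
def isLim (X : C) (l : O) : Prop :=
  (∀ x, S.mem x X → S.lt x l) ∧ ∀ l', (∀ x, S.mem x X → S.lt x l') → S.le l l'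

/-- `X` is bounded: it has a limit. -/
def bnd (X : C) : Prop := ∃ l, S.isLim X l

/-- `Y` is a subclass of `X`. -/
def subclass (Y X : C) : Prop := ∀ z, S.mem z Y → S.mem z X

/-- Equinumerosity: there is a class bijection between `X` and `Y`. -/
def equinum (X Y : C) : Prop :=
  ∃ R : O → O → Prop, (∀ a b, R a b → S.mem a X ∧ S.mem b Y) ∧
    (∀ a, S.mem a X → ∃! b, R a b) ∧ (∀ b, S.mem b Y → ∃! a, R a b)

/-- `i = lim {ι(Y) : Y ≺ X}`: `i` is the least ordinal strictly above all
indices of classes prior to `X`. -/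
def indexSpec (X : C) (i : O) : Prop :=
  (∀ Y j, S.prec Y X → S.iota Y j → S.lt j i) ∧
    ∀ i', (∀ Y j, S.prec Y X → S.iota Y j → S.lt j i') → S.le i i'

/-- The interpreted set membership: `y ∈* x` iff `y ε ι⁻¹(x)`. -/
def memStar (y x : O) : Prop := ∃ X, S.mem y X ∧ S.iota X x

/-- The axioms of COT. -/
structure Axioms : Prop where
  /-- Comprehension. -/
  comp : ∀ P : O → Prop, ∃ X, ∀ x, S.mem x X ↔ P x
  /-- `≺` is transitive. -/
  prec_trans : ∀ X Y Z, S.prec X Y → S.prec Y Z → S.prec X Z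
  /-- `≺` is co-connected. -/
  coConnected : ∀ X Y, ¬ S.equiv X Y ↔ (S.prec X Y ∨ S.prec Y X)
  /-- `≺` is well-founded (schema). -/
  wf : ∀ P : C → Prop, (∃ X, P X) → ∃ M, P M ∧ ∀ Y, P Y → ¬ S.prec Y M
  /-- Respective: `lim X ≤ y ε Y → X ≺ Y`. -/
  respective : ∀ X Y l y, S.isLim X l → S.le l y → S.mem y Y → S.prec X Y
  /-- `ι` is a partial function. -/
  iota_fun : ∀ X i j, S.iota X i → S.iota X j → i = j
  /-- Indexing: every bounded class has an index. -/
  indexing : ∀ X, S.bnd X → ∃ i, S.iota X i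
  /-- The index satisfies `ι(X) = lim {ι(Y) : Y ≺ X}`. -/
  iota_spec : ∀ X i, S.iota X i → S.indexSpec X i
  /-- Infinity: there is a nonzero ordinal closed under successor from below. -/
  infinity : ∃ l : O, (∃ k, S.lt k l) ∧ ∀ x, S.lt x l → ∃ y, S.lt x y ∧ S.lt y l
  /-- Boundedness: a class equinumerous with a bounded class is bounded. -/
  boundedness : ∀ X Y, S.bnd X → S.equinum X Y → S.bnd Y

end COT

set_option linter.unusedSectionVars false


namespace COT

open Classical Cardinal

variable {O : Type u} {C : Type v} {S : COT O C} (hS : S.Axioms)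

section Aux

lemma equiv_refl (X : C) : S.equiv X X := fun _ => Iff.rfl

include hS

lemma prec_not_equiv {X Y : C} (h : S.prec X Y) : ¬ S.equiv X Y := by
  intro he
  exact ((hS.coConnected X Y).mpr (Or.inl h)) he

lemma prec_irrefl (X : C) : ¬ S.prec X X := fun h => prec_not_equiv hS h (equiv_refl X)

lemma prec_asymm {X Y : C} (h : S.prec X Y) (h' : S.prec Y X) : False :=
  prec_irrefl hS X (hS.prec_trans X Y X h h')

lemma prec_congr_left {X X' Y : C} (he : S.equiv X X') (h : S.prec X Y) : S.prec X' Y := by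
  have hne : ¬ S.equiv X' Y := by
    intro h2
    exact prec_not_equiv hS h (fun z => (he z).trans (h2 z))
  rcases (hS.coConnected X' Y).mp hne with h3 | h3
  · exact h3
  · exact absurd (fun z => he z) (prec_not_equiv hS (hS.prec_trans X Y X' h h3))

lemma prec_congr_right {X Y Y' : C} (he : S.equiv Y Y') (h : S.prec X Y) : S.prec X Y' := by
  have hne : ¬ S.equiv X Y' := by
    intro h2
    exact prec_not_equiv hS h (fun z => (h2 z).trans ((he z).symm))
  rcases (hS.coConnected X Y').mp hne with h3 | h3
  · exact h3
  · exact absurd (fun z => (he z).symm) (prec_not_equiv hS (hS.prec_trans Y' X Y h3 h))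

lemma sing_exists (x : O) : ∃ X, S.isSing x X := hS.comp (fun z => z = x)

omit hS in
lemma sing_equiv {x : O} {X X' : C} (h : S.isSing x X) (h' : S.isSing x X') : S.equiv X X' :=
  fun z => (h z).trans (h' z).symm

lemma lt_of_sing_prec {x y : O} {X Y : C} (hX : S.isSing x X) (hY : S.isSing y Y)
    (h : S.prec X Y) : S.lt x y := by
  intro X' Y' hX' hY'
  exact prec_congr_right hS (sing_equiv hY hY')
    (prec_congr_left hS (sing_equiv hX hX') h)

lemma lt_irrefl (x : O) : ¬ S.lt x x := by
  intro h
  obtain ⟨X, hX⟩ := sing_exists hS x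
  exact prec_irrefl hS X (h X X hX hX)

lemma lt_trans {x y z : O} (h : S.lt x y) (h' : S.lt y z) : S.lt x z := by
  intro X Z hX hZ
  obtain ⟨Y, hY⟩ := sing_exists hS y
  exact hS.prec_trans X Y Z (h X Y hX hY) (h' Y Z hY hZ)

lemma lt_asymm {x y : O} (h : S.lt x y) (h' : S.lt y x) : False :=
  lt_irrefl hS x (lt_trans hS h h')

lemma lt_connected {x y : O} (hne : x ≠ y) : S.lt x y ∨ S.lt y x := by
  obtain ⟨X, hX⟩ := sing_exists hS x
  obtain ⟨Y, hY⟩ := sing_exists hS y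
  have hne2 : ¬ S.equiv X Y := by
    intro he
    exact hne ((hY x).mp ((he x).mp ((hX x).mpr rfl)))
  rcases (hS.coConnected X Y).mp hne2 with h | h
  · exact Or.inl (lt_of_sing_prec hS hX hY h)
  · exact Or.inr (lt_of_sing_prec hS hY hX h)

lemma le_of_not_lt {x y : O} (h : ¬ S.lt x y) : S.le y x := by
  by_cases hxy : x = y
  · exact Or.inr hxy.symm
  · rcases lt_connected hS (Ne.symm hxy) with h' | h'
    · exact Or.inl h'
    · exact absurd h' h

lemma not_lt_of_le {x y : O} (h : S.le x y) : ¬ S.lt y x := by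
  rcases h with h | rfl
  · exact fun h' => lt_asymm hS h h'
  · exact lt_irrefl hS x

lemma lt_of_le_of_lt {x y z : O} (h : S.le x y) (h' : S.lt y z) : S.lt x z := by
  rcases h with h | rfl
  · exact lt_trans hS h h'
  · exact h'

lemma lt_of_lt_of_le {x y z : O} (h : S.lt x y) (h' : S.le y z) : S.lt x z := by
  rcases h' with h' | rfl
  · exact lt_trans hS h h'
  · exact h

/-- Well-foundedness of `lt`: every nonempty predicate has a least element. -/
lemma lt_min (P : O → Prop) (hne : ∃ x, P x) : ∃ m, P m ∧ ∀ y, P y → S.le m y := by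
  obtain ⟨x0, hx0⟩ := hne
  obtain ⟨X0, hX0⟩ := sing_exists hS x0
  obtain ⟨M, ⟨m, hMm, hPm⟩, hmin⟩ := hS.wf (fun X => ∃ x, S.isSing x X ∧ P x) ⟨X0, x0, hX0, hx0⟩
  refine ⟨m, hPm, fun y hy => ?_⟩
  obtain ⟨Y, hY⟩ := sing_exists hS y
  have : ¬ S.prec Y M := hmin Y ⟨y, hY, hy⟩
  have hnlt : ¬ S.lt y m := fun h => this (h Y M hY hMm)
  exact le_of_not_lt hS hnlt

/-- Every class bounded above has a limit. -/
lemma bnd_of_ub {X : C} (h : ∃ b, ∀ z, S.mem z X → S.lt z b) :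
    ∃ l, S.isLim X l ∧ ∀ b, (∀ z, S.mem z X → S.lt z b) → S.le l b := by
  obtain ⟨m, hPm, hmin⟩ := lt_min hS (fun l => ∀ z, S.mem z X → S.lt z l) h
  exact ⟨m, ⟨hPm, hmin⟩, hmin⟩

lemma iota_inj {X X' : C} {i : O} (h : S.iota X i) (h' : S.iota X' i) : S.equiv X X' := by
  by_contra hne
  rcases (hS.coConnected X X').mp hne with hp | hp
  · exact lt_irrefl hS i ((hS.iota_spec X' i h').1 X i hp h)
  · exact lt_irrefl hS i ((hS.iota_spec X i h).1 X' i hp h')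

lemma iota_mono {X Y : C} {i j : O} (hp : S.prec X Y) (hX : S.iota X i) (hY : S.iota Y j) :
    S.lt i j := (hS.iota_spec Y j hY).1 X i hp hX

/-- The class of predecessors of `y` has limit `y`. -/
lemma isLim_pred {y : O} {D : C} (hD : ∀ z, S.mem z D ↔ S.lt z y) : S.isLim D y := by
  constructor
  · exact fun x hx => (hD x).mp hx
  · intro l' hl'
    by_contra hnle
    have hne : y ≠ l' := fun h => hnle (Or.inr h)
    rcases lt_connected hS hne with h | h
    · exact hnle (Or.inl h)
    · exact lt_irrefl hS l' (hl' l' ((hD l').mpr h))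

/-- `y ≤ ι({z | z < y})`. -/
lemma le_iota_pred : ∀ (y : O) (D : C) (d : O),
    (∀ z, S.mem z D ↔ S.lt z y) → S.iota D d → S.le y d := by
  by_contra hcon
  push_neg at hcon
  have hex : ∃ y, ∃ (D : C) (d : O),
      (∀ z, S.mem z D ↔ S.lt z y) ∧ S.iota D d ∧ ¬ S.le y d := by
    obtain ⟨y, D, d, h1, h2, h3⟩ := hcon
    exact ⟨y, D, d, h1, h2, h3⟩
  obtain ⟨m, ⟨D, d, hD, hι, hnle⟩, hmin⟩ := lt_min hS _ hex
  have hdm : S.lt d m := by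
    rcases lt_connected hS (fun h : d = m => hnle (Or.inr h.symm)) with h | h
    · exact h
    · exact absurd (Or.inl h) hnle
  obtain ⟨D', hD'⟩ := hS.comp (fun z => S.lt z d)
  have hprec : S.prec D' D :=
    hS.respective D' D d d (isLim_pred hS hD') (Or.inr rfl) ((hD d).mpr hdm)
  obtain ⟨d', hι'⟩ := hS.indexing D' ⟨d, isLim_pred hS hD'⟩
  have hlt : S.lt d' d := iota_mono hS hprec hι' hι
  have : S.le m d := hmin d ⟨D', d', hD', hι', fun h => not_lt_of_le hS h hlt⟩
  exact not_lt_of_le hS this hdm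

/-- Every ordinal below an index is an index. -/
lemma index_of_lt_index {i j : O} {X : C} (hX : S.iota X i) (hj : S.lt j i) :
    ∃ Y, S.iota Y j := by
  by_contra hcon
  have hex : ∃ M : C, ∃ i j, S.iota M i ∧ S.lt j i ∧ ¬ ∃ Y, S.iota Y j := ⟨X, i, j, hX, hj, hcon⟩
  obtain ⟨M, ⟨i', j', hι, hlt, hnj⟩, hmin⟩ := hS.wf _ hex
  have h2 : ¬ ∀ Y k, S.prec Y M → S.iota Y k → S.lt k j' := by
    intro h
    exact not_lt_of_le hS ((hS.iota_spec M i' hι).2 j' h) hlt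
  push_neg at h2
  obtain ⟨Y, k, hpYM, hιY, hnlt⟩ := h2
  have hjk : S.lt j' k := by
    rcases lt_connected hS (fun h : j' = k => hnj ⟨Y, h ▸ hιY⟩) with h | h
    · exact h
    · exact absurd h hnlt
  exact hmin Y ⟨k, j', hιY, hjk, hnj⟩ hpYM

/-- Every ordinal is an index. -/
lemma index_total (y : O) : ∃ Y, S.iota Y y := by
  obtain ⟨D, hD⟩ := hS.comp (fun z => S.lt z y)
  obtain ⟨d, hι⟩ := hS.indexing D ⟨y, isLim_pred hS hD⟩
  rcases le_iota_pred hS y D d hD hι with h | rfl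
  · exact index_of_lt_index hS hι h
  · exact ⟨D, hι⟩

/-- Elements of a class with index `x` are `< x`. -/
lemma mem_lt_index {A : C} {x y : O} (hι : S.iota A x) (hy : S.mem y A) : S.lt y x := by
  obtain ⟨D, hD⟩ := hS.comp (fun z => S.lt z y)
  have hlim := isLim_pred hS hD
  obtain ⟨d, hιD⟩ := hS.indexing D ⟨y, hlim⟩
  have hprec : S.prec D A := hS.respective D A y y hlim (Or.inr rfl) hy
  have : S.lt d x := iota_mono hS hprec hιD hι
  exact lt_of_le_of_lt hS (le_iota_pred hS y D d hD hιD) this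

lemma memStar_iff {X : C} {x y : O} (hι : S.iota X x) : S.memStar y x ↔ S.mem y X := by
  constructor
  · rintro ⟨X', hm, hι'⟩
    exact (iota_inj hS hι' hι y).mp hm
  · exact fun h => ⟨X, h, hι⟩

/-- There is no greatest ordinal. -/
lemma no_max : ¬ ∃ a : O, ∀ y, S.le y a := by
  rintro ⟨a, ha⟩
  -- O is infinite below a
  obtain ⟨l, ⟨k, hkl⟩, hdens⟩ := hS.infinity
  set β := {z : O // S.lt z a} with hβ
  have hmemβ : ∀ z, S.lt z l → S.lt z a := fun z hz => lt_of_lt_of_le hS hz (ha l)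
  -- build a strictly increasing chain
  have hchain : ∀ x : {z : O // S.lt z l}, ∃ y : {z : O // S.lt z l}, S.lt x.1 y.1 := by
    rintro ⟨x, hx⟩
    obtain ⟨y, h1, h2⟩ := hdens x hx
    exact ⟨⟨y, h2⟩, h1⟩
  choose succ hsucc using hchain
  let f : ℕ → {z : O // S.lt z l} := fun n => Nat.rec ⟨k, hkl⟩ (fun _ p => succ p) n
  have hfmono : ∀ m n : ℕ, m < n → S.lt (f m).1 (f n).1 := by
    intro m n hmn
    induction n with
    | zero => omega
    | succ n ih =>
      rcases Nat.lt_succ_iff_lt_or_eq.mp hmn with h | h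
      · exact lt_trans hS (ih h) (hsucc (f n))
      · exact h ▸ hsucc (f n)
  have hinf : Infinite β := by
    refine Infinite.of_injective (fun n => (⟨(f n).1, hmemβ _ (f n).2⟩ : β)) ?_
    intro m n hmn
    have heq : (f m).1 = (f n).1 := by
      have := congrArg Subtype.val hmn
      simpa using this
    by_contra hne
    rcases Nat.lt_or_ge m n with h | h
    · exact lt_irrefl hS (f n).1 (heq ▸ hfmono m n h)
    · have h' : n < m := by omega
      exact lt_irrefl hS (f m).1 (heq ▸ hfmono n m h')
  -- injection from Set β into O
  have hΦ : ∀ s : Set β, ∃ (i : O) (X : C), S.iota X i ∧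
      ∀ z : O, S.mem z X ↔ ∃ h : S.lt z a, (⟨z, h⟩ : β) ∈ s := by
    intro s
    obtain ⟨X, hX⟩ := hS.comp (fun z => ∃ h : S.lt z a, (⟨z, h⟩ : β) ∈ s)
    have hub : ∀ z, S.mem z X → S.lt z a := by
      intro z hz
      obtain ⟨h, _⟩ := (hX z).mp hz
      exact h
    obtain ⟨m, hm, _⟩ := bnd_of_ub hS ⟨a, hub⟩
    obtain ⟨i, hι⟩ := hS.indexing X ⟨m, hm⟩
    exact ⟨i, X, hι, hX⟩
  choose Φ XΦ hΦι hΦmem using hΦ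
  have hΦinj : Function.Injective Φ := by
    intro s t hst
    have heq : S.equiv (XΦ s) (XΦ t) := iota_inj hS (hΦι s) (hst ▸ hΦι t)
    ext ⟨z, hz⟩
    constructor
    · intro h
      obtain ⟨h', hmem⟩ := (hΦmem t z).mp ((heq z).mp ((hΦmem s z).mpr ⟨hz, h⟩))
      exact hmem
    · intro h
      obtain ⟨h', hmem⟩ := (hΦmem s z).mp ((heq z).mpr ((hΦmem t z).mpr ⟨hz, h⟩))
      exact hmem
  -- injection from O into Option β
  have hg : Function.Injective (fun y : O =>
      if h : S.lt y a then (some ⟨y, h⟩ : Option β) else none) := by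
    intro y y' h
    by_cases hy : S.lt y a <;> by_cases hy' : S.lt y' a <;> simp [hy, hy'] at h
    · exact Subtype.ext_iff.mp h
    · have h1 : y = a := by
        rcases ha y with h2 | h2
        · exact absurd h2 hy
        · exact h2
      have h2 : y' = a := by
        rcases ha y' with h2 | h2
        · exact absurd h2 hy'
        · exact h2
      rw [h1, h2]
  -- Cantor
  have h1 : #(Set β) ≤ #O := Cardinal.mk_le_of_injective hΦinj
  have h2 : #O ≤ #(Option β) := Cardinal.mk_le_of_injective hg
  have h3 : (2 : Cardinal) ^ #β ≤ #β := by
    calc (2 : Cardinal) ^ #β = #(Set β) := Cardinal.mk_set.symm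
    _ ≤ #(Option β) := h1.trans h2
    _ = #β + 1 := Cardinal.mk_option
    _ = #β := Cardinal.add_one_eq (Cardinal.infinite_iff.mp hinf)
  exact absurd h3 (not_le.mpr (Cardinal.cantor _))

end Aux

end COT


/-- Power Set for the interpreted membership `∈*` in COT. -/
theorem COT.memStar_power {O C : Type*} (S : COT O C) (hS : S.Axioms) :
    ∀ a : O, ∃ x : O, ∀ y, S.memStar y x ↔ (∀ z, S.memStar z y → S.memStar z a) := by
  intro a
  obtain ⟨A, hA⟩ := index_total hS a
  obtain ⟨X, hX⟩ := hS.comp (fun y => ∀ z, S.memStar z y → S.memStar z a)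
  -- a bound strictly above a
  have hb : ∃ b, S.lt a b := by
    by_contra hcon
    push_neg at hcon
    exact no_max hS ⟨a, fun y => le_of_not_lt hS (hcon y)⟩
  obtain ⟨b, hab⟩ := hb
  obtain ⟨Sa, hSa⟩ := sing_exists hS a
  have hSabnd : ∃ m, S.isLim Sa m := by
    obtain ⟨m, hm, _⟩ := bnd_of_ub hS ⟨b, fun z hz => ((hSa z).mp hz) ▸ hab⟩
    exact ⟨m, hm⟩
  obtain ⟨s, hιs⟩ := hS.indexing Sa hSabnd
  -- every element of X is < s
  have hXub : ∀ y, S.mem y X → S.lt y s := by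
    intro y hy
    have hP : ∀ z, S.memStar z y → S.memStar z a := (hX y).mp hy
    obtain ⟨Y, hιY⟩ := index_total hS y
    have hYub : ∀ z, S.mem z Y → S.lt z a := by
      intro z hz
      obtain ⟨Z, hmZ, hιZ⟩ := hP z ⟨Y, hz, hιY⟩
      exact mem_lt_index hS hA ((iota_inj hS hιZ hA z).mp hmZ)
    obtain ⟨m, hm, hmle⟩ := bnd_of_ub hS ⟨a, hYub⟩
    have hprec : S.prec Y Sa := hS.respective Y Sa m a hm (hmle a hYub) ((hSa a).mpr rfl)
    exact iota_mono hS hprec hιY hιs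
  obtain ⟨m, hm, _⟩ := bnd_of_ub hS ⟨s, hXub⟩
  obtain ⟨x, hιx⟩ := hS.indexing X ⟨m, hm⟩
  refine ⟨x, fun y => ?_⟩
  rw [memStar_iff hS hιx, hX y]
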